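/- Let a ≡ 0 (mod 4) with a ≥ 4, i ≥ 0, and n = (8a+3)a + (4a+1)i + 2a + 1 + l with 0 ≤ l ≤ 2a − a/2. Then with m = a + n and x = 2a + 1 + i, the minimum of |a·x|_m, |(a+1)·x|_m, |(2a+1)·x|_m, |(3a+1)·x|_m, |n·x|_m equals a(2a+1+i); consequently κ({a, a+1, 2a+1, 3a+1, n}) ≥ a(2a+1+i)/(a+n). -/
import Mathlib


/-- `absMod y m` is the distance from `y` to the nearest multiple of `m`. -/
def absMod (y m : ℕ) : ℕ := min (y % m) (m - y % m)

/-- `S` is an `M`-set: no two (distinct) elements of `S` differ by an element of `M`. -/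
def isMSet (M S : Set ℕ) : Prop := ∀ x ∈ S, ∀ y ∈ S, x ≠ y → x - y ∉ M

/-- The Cantor--Gordon parameter κ(M). -/
noncomputable def kappa (M : Set ℕ) : ℝ :=
  sSup {q : ℝ | ∃ c m : ℕ, 0 < m ∧ Nat.Coprime c m ∧
    q = sInf {r : ℝ | ∃ k ∈ M, r = (absMod (c * k) m : ℝ)} / m}

/-- Upper asymptotic density of a set of nonnegative integers. -/
noncomputable def upperDensity (S : Set ℕ) : ℝ :=
  Filter.limsup (fun x : ℕ => ((S ∩ Set.Iic x).ncard : ℝ) / x) Filter.atTop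

/-- Motzkin's maximal density μ(M) over all M-sets. -/
noncomputable def mu (M : Set ℕ) : ℝ :=
  sSup {d : ℝ | ∃ S : Set ℕ, isMSet M S ∧ d = upperDensity S}


lemma absMod_scale (y mm d : ℕ) : absMod (y*d) (mm*d) = absMod y mm * d := by
  unfold absMod
  rw [Nat.mul_mod_mul_right, ← Nat.sub_mul, min_mul_mul_right]

lemma absMod_le (y m : ℕ) : absMod y m ≤ m :=
  le_trans (min_le_right _ _) (Nat.sub_le _ _)

set_option linter.unusedVariables false in
set_option linter.unusedSectionVars false in
set_option maxHeartbeats 1000000 in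
theorem stmt7 (a i l n : ℕ) (ha : 4 ≤ a) (ha4 : a % 4 = 0)
    (hl : l ≤ 2*a - a/2)
    (hn : n = (8*a+3)*a + (4*a+1)*i + 2*a + 1 + l) :
    min (min (absMod (a*(2*a+1+i)) (a+n)) (absMod ((a+1)*(2*a+1+i)) (a+n)))
      (min (absMod ((2*a+1)*(2*a+1+i)) (a+n))
        (min (absMod ((3*a+1)*(2*a+1+i)) (a+n)) (absMod (n*(2*a+1+i)) (a+n))))
          = a*(2*a+1+i) ∧
    kappa {a, a+1, 2*a+1, 3*a+1, n} ≥ (a*(2*a+1+i) : ℝ) / (a+n) := by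
  set x := 2*a+1+i with hxdef
  set m := a + n with hmdef
  have hx0 : 0 < x := by omega
  have hxl : l ≤ x := by omega
  have hm : m = (4*a+1)*x + l := by rw [hmdef, hn, hxdef]; ring
  clear hn hl ha4
  have hax : 0 < a*x := Nat.mul_pos (by omega) hx0
  have e1 : a*x ≤ (a+1)*x := Nat.mul_le_mul_right x (by omega)
  have e2 : 2*((a+1)*x) = (2*a+2)*x := by ring
  have e3 : (2*a+2)*x ≤ (4*a+1)*x := Nat.mul_le_mul_right x (by omega)
  have e4 : 2*((2*a+1)*x) = (4*a+1)*x + x := by ring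
  have e5 : (3*a+1)*x + (a*x + l) = m := by rw [hm]; ring
  have e6 : (2*a+1)*x + (2*(a*x) + l) = m := by rw [hm]; ring
  have e8 : (2*a+1)*x ≤ (3*a+1)*x := Nat.mul_le_mul_right x (by omega)
  have hm0 : 0 < m := by omega
  have f1 : a*x ≤ m - a*x := by omega
  have f2 : (a+1)*x ≤ m - (a+1)*x := by omega
  have f3 : m - (2*a+1)*x = 2*(a*x) + l := by omega
  have f3' : m - (2*a+1)*x ≤ (2*a+1)*x := by omega
  have f4 : m - (3*a+1)*x = a*x + l := by omega
  have f4' : m - (3*a+1)*x ≤ (3*a+1)*x := by omega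
  have f6 : m - (m - a*x) = a*x := by omega
  have g1 : a*x ≤ 2*(a*x) + l := by omega
  have modA : a*x % m = a*x := Nat.mod_eq_of_lt (by omega)
  have modB : (a+1)*x % m = (a+1)*x := Nat.mod_eq_of_lt (by omega)
  have modC : (2*a+1)*x % m = (2*a+1)*x := Nat.mod_eq_of_lt (by omega)
  have modD : (3*a+1)*x % m = (3*a+1)*x := Nat.mod_eq_of_lt (by omega)
  have modE : n*x % m = m - a*x := by
    have hb : n*x = m*(x-1) + (m - a*x) := by
      zify [show a*x ≤ m by omega, show 1 ≤ x by omega]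
      rw [hmdef]; push_cast; ring
    rw [hb, Nat.mul_add_mod, Nat.mod_eq_of_lt (by omega)]
  have vA : absMod (a*x) m = a*x := by unfold absMod; rw [modA]; exact min_eq_left f1
  have vB : absMod ((a+1)*x) m = (a+1)*x := by unfold absMod; rw [modB]; exact min_eq_left f2
  have vC : absMod ((2*a+1)*x) m = 2*(a*x) + l := by unfold absMod; rw [modC, min_eq_right f3', f3]
  have vD : absMod ((3*a+1)*x) m = a*x + l := by unfold absMod; rw [modD, min_eq_right f4', f4]
  have vE : absMod (n*x) m = a*x := by unfold absMod; rw [modE, f6]; exact min_eq_right f1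
  have hpart1 : min (min (absMod (a*x) m) (absMod ((a+1)*x) m))
      (min (absMod ((2*a+1)*x) m)
        (min (absMod ((3*a+1)*x) m) (absMod (n*x) m))) = a*x := by
    rw [vA, vB, vC, vD, vE, min_eq_left e1, min_eq_right (Nat.le_add_right _ _),
      min_eq_right g1, min_self]
  refine ⟨hpart1, ?_⟩
  -- kappa part
  set d := Nat.gcd x m with hd
  have hd0 : 0 < d := Nat.gcd_pos_of_pos_left m hx0
  set c := x / d with hc
  set m' := m / d with hm'
  have hcd : c * d = x := Nat.div_mul_cancel (Nat.gcd_dvd_left x m)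
  have hm'd : m' * d = m := Nat.div_mul_cancel (Nat.gcd_dvd_right x m)
  have hm'0 : 0 < m' := Nat.div_pos (Nat.le_of_dvd hm0 (Nat.gcd_dvd_right x m)) hd0
  have hco : Nat.Coprime c m' := Nat.coprime_div_gcd_div_gcd hd0
  have hscale : ∀ k : ℕ, absMod (c*k) m' * d = absMod (k*x) m := by
    intro k
    calc absMod (c*k) m' * d = absMod (c*k*d) (m'*d) := (absMod_scale _ _ _).symm
      _ = absMod (k*x) m := by rw [hm'd, show c*k*d = k*(c*d) by ring, hcd]
  have fa : absMod (c*a) m' * d = a*x := by rw [hscale a, vA]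
  have lower : ∀ k ∈ ({a, a+1, 2*a+1, 3*a+1, n} : Set ℕ), a*x ≤ absMod (c*k) m' * d := by
    intro k hk
    simp only [Set.mem_insert_iff, Set.mem_singleton_iff] at hk
    rcases hk with rfl | rfl | rfl | rfl | rfl
    · rw [hscale, vA]
    · rw [hscale, vB]; exact e1
    · rw [hscale, vC]; exact g1
    · rw [hscale, vD]; exact Nat.le_add_right _ _
    · rw [hscale, vE]
  set S : Set ℝ := {r : ℝ | ∃ k ∈ ({a, a+1, 2*a+1, 3*a+1, n} : Set ℕ),
      r = (absMod (c*k) m' : ℝ)} with hS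
  have hSne : S.Nonempty := ⟨_, a, Set.mem_insert _ _, rfl⟩
  have hSbd : BddBelow S := ⟨0, by rintro r ⟨k, hk, rfl⟩; exact Nat.cast_nonneg _⟩
  have hsinf : sInf S = (absMod (c*a) m' : ℝ) := by
    refine le_antisymm (csInf_le hSbd ⟨a, Set.mem_insert _ _, rfl⟩) ?_
    refine le_csInf hSne ?_
    rintro r ⟨k, hk, rfl⟩
    have : absMod (c*a) m' ≤ absMod (c*k) m' :=
      Nat.le_of_mul_le_mul_right (by rw [fa]; exact lower k hk) hd0
    exact_mod_cast this
  have hbddK : BddAbove {q : ℝ | ∃ c₀ m₀ : ℕ, 0 < m₀ ∧ Nat.Coprime c₀ m₀ ∧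
      q = sInf {r : ℝ | ∃ k ∈ ({a, a+1, 2*a+1, 3*a+1, n} : Set ℕ),
        r = (absMod (c₀ * k) m₀ : ℝ)} / m₀} := by
    refine ⟨1, ?_⟩
    rintro q ⟨c₀, m₀, hm₀, -, rfl⟩
    have hb : BddBelow {r : ℝ | ∃ k ∈ ({a, a+1, 2*a+1, 3*a+1, n} : Set ℕ),
        r = (absMod (c₀ * k) m₀ : ℝ)} :=
      ⟨0, by rintro r ⟨k, hk, rfl⟩; exact Nat.cast_nonneg _⟩
    have h1 : sInf {r : ℝ | ∃ k ∈ ({a, a+1, 2*a+1, 3*a+1, n} : Set ℕ),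
        r = (absMod (c₀ * k) m₀ : ℝ)} ≤ (absMod (c₀ * a) m₀ : ℝ) :=
      csInf_le hb ⟨a, Set.mem_insert _ _, rfl⟩
    have h2 : (absMod (c₀ * a) m₀ : ℝ) ≤ m₀ := by exact_mod_cast absMod_le _ _
    exact div_le_one_of_le₀ (h1.trans h2) (Nat.cast_nonneg _)
  have hqmem : sInf S / (m' : ℝ) ∈ {q : ℝ | ∃ c₀ m₀ : ℕ, 0 < m₀ ∧ Nat.Coprime c₀ m₀ ∧
      q = sInf {r : ℝ | ∃ k ∈ ({a, a+1, 2*a+1, 3*a+1, n} : Set ℕ),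
        r = (absMod (c₀ * k) m₀ : ℝ)} / m₀} := ⟨c, m', hm'0, hco, rfl⟩
  have hkey : (a*(2*a+1+i) : ℝ) / ((a : ℝ)+n) = sInf S / (m' : ℝ) := by
    have n1 : ((a*x : ℕ) : ℝ) = (a : ℝ)*(2*(a:ℝ)+1+(i:ℝ)) := by
      rw [hxdef]; push_cast; ring
    have n2 : ((m : ℕ) : ℝ) = (a : ℝ) + (n : ℝ) := by rw [hmdef]; push_cast; ring
    have hv : ((absMod (c*a) m' : ℕ) : ℝ) * d = ((a*x : ℕ) : ℝ) := by exact_mod_cast fa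
    have hM : ((m' : ℕ) : ℝ) * d = ((m : ℕ) : ℝ) := by exact_mod_cast hm'd
    rw [hsinf, ← n1, ← n2, ← hv, ← hM,
      mul_div_mul_right _ _ (show (d:ℝ) ≠ 0 by exact_mod_cast hd0.ne')]
  rw [ge_iff_le, hkey, kappa]
  exact le_csSup hbddK hqmem
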